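/- arXiv:2108.05413 — 2 statements merged into one kernel-verified Lean document; each statement's English description precedes it below -/
import Mathlib

section
/- Fix L > 0 and 0 < δ < 1, and let 1/2 < γ < 1. Then there exist a universal constant c > 0 and n₀ ∈ ℕ (depending only on δ) such that for all n > n₀ and every v ∈ Incomp(δ, δ n^{1/2-γ}), there exists k ∈ {1,...,n} with n - δn/log(n) ≤ k and LCD_{L}( v_{[1:k]} / ‖v_{[1:k]}‖₂ ) ≥ c √n / log n. -/
open MeasureTheory ProbabilityTheory Real
open scoped ENNReal

noncomputable section

namespace Paper

def toE {m : ℕ} (v : Fin m → ℝ) : EuclideanSpace ℝ (Fin m) := WithLp.toLp 2 v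

def mulE {m n : ℕ} (M : Matrix (Fin m) (Fin n) ℝ) (x : EuclideanSpace ℝ (Fin n)) :
    EuclideanSpace ℝ (Fin m) := toE (M.mulVec (fun i => x i))

def opNorm {n : ℕ} (M : Matrix (Fin n) (Fin n) ℝ) : ℝ :=
  sSup {r : ℝ | ∃ x : EuclideanSpace ℝ (Fin n), ‖x‖ = 1 ∧ r = ‖mulE M x‖}

def sMin {n : ℕ} (M : Matrix (Fin n) (Fin n) ℝ) : ℝ :=
  sInf {r : ℝ | ∃ x : EuclideanSpace ℝ (Fin n), ‖x‖ = 1 ∧ r = ‖mulE M x‖}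

def suppCard {n : ℕ} (v : EuclideanSpace ℝ (Fin n)) : ℕ := Nat.card {i : Fin n // v i ≠ 0}

def Comp {n : ℕ} (δ ρ : ℝ) : Set (EuclideanSpace ℝ (Fin n)) :=
  {x | ‖x‖ = 1 ∧ ∃ z : EuclideanSpace ℝ (Fin n), (suppCard z : ℝ) ≤ δ * n ∧ ‖x - z‖ ≤ ρ}

def Incomp {n : ℕ} (δ ρ : ℝ) : Set (EuclideanSpace ℝ (Fin n)) :=
  {x | ‖x‖ = 1 ∧ x ∉ Comp δ ρ}

def logPlus (x : ℝ) : ℝ := max (Real.log x) 0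

def LCD {m : ℕ} (L : ℝ) (v : EuclideanSpace ℝ (Fin m)) : ℝ :=
  sInf {θ : ℝ | 0 < θ ∧ ∃ p : Fin m → ℤ,
    ‖θ • v - toE (fun i => (p i : ℝ))‖ < L * Real.sqrt (logPlus (‖θ • v‖ / L))}

def nzd {m : ℕ} (w : EuclideanSpace ℝ (Fin m)) : EuclideanSpace ℝ (Fin m) := ‖w‖⁻¹ • w

def trunc {n : ℕ} (v : EuclideanSpace ℝ (Fin n)) (σ : Equiv.Perm (Fin n)) (k : ℕ)
    (hk : k ≤ n) : EuclideanSpace ℝ (Fin k) := WithLp.toLp 2 (fun i => v (σ (Fin.castLE hk i)))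

def IsOrdering {n : ℕ} (v : EuclideanSpace ℝ (Fin n)) (σ : Equiv.Perm (Fin n)) : Prop :=
  ∀ i j : Fin n, i ≤ j → |v (σ i)| ≤ |v (σ j)|

def TV {n k : ℕ} (v : EuclideanSpace ℝ (Fin n)) (I : Finset (Fin n)) (h : I.card = k) :
    EuclideanSpace ℝ (Fin k) := WithLp.toLp 2 (fun i => v (I.orderIsoOfFin h i))

def colE {n : ℕ} (A : Matrix (Fin n) (Fin n) ℝ) (l : Fin n) : EuclideanSpace ℝ (Fin n) :=
  WithLp.toLp 2 (fun i => A i l)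

def GK {n : ℕ} (K : ℝ) (M : Matrix (Fin n) (Fin n) ℝ) : Set (EuclideanSpace ℝ (Fin n)) :=
  {v | ‖v‖ ≤ 1 ∧ ‖mulE M v‖ ≤ 2 * K * Real.sqrt n}

def EI {n : ℕ} (I : Finset (Fin n)) : Set (EuclideanSpace ℝ (Fin n)) :=
  {v | ∀ i, i ∉ I → v i = 0}

def IsCenteredSubgUnit (ν : Measure ℝ) : Prop :=
  IsProbabilityMeasure ν ∧ (∫ x, x ∂ν) = 0 ∧ (∫ x, x ^ 2 ∂ν) = 1 ∧
    ∃ B > 0, ∀ t > 0, ν {x : ℝ | t < |x|} ≤ ENNReal.ofReal (2 * Real.exp (-t ^ 2 / B ^ 2))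

def IsIIDEntries {n : ℕ} {Ω : Type} [MeasureSpace Ω] (ν : Measure ℝ)
    (R : Ω → Matrix (Fin n) (Fin n) ℝ) : Prop :=
  (∀ i j, Measurable fun ω => R ω i j) ∧
  (∀ i j, Measure.map (fun ω => R ω i j) ℙ = ν) ∧
  iIndepFun (fun ij : Fin n × Fin n => fun ω => R ω ij.1 ij.2) ℙ

/-!
Let `a₀ ≤ ⋯ ≤ a_{n-1}` be the sorted absolute coordinates of `v` and `S_k = a₀² + ⋯ + a_{k-1}²`
the squared norm of `v_{[1:k]}`. Incompressibility forces `S_k > ρ² ≥ δ²/n` whenever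
`n - k ≤ δn`. Put `r = ⌊δn / log n⌋` and `β = 3 log² n / (δn)`. If `a_{k-1}² > β S_k` for every
`k ∈ (n - r, n]`, then `S_{n-r} ≤ (1 - β)^r ≤ e / n³`, which is too small; so for some such `k`
every coordinate of the normalised truncation is at most `√β` in absolute value. A unit vector
with coordinates bounded by `B` has LCD at least `1 / (2B)`, and `1 / (2√β) = √(δ/12) · √n / log n`.
-/

open Finset

section SortedCoordinates

variable {n : ℕ} (v : EuclideanSpace ℝ (Fin n)) (σ : Equiv.Perm (Fin n))

/-- `|v (σ i)|` for `i < n` and `0` otherwise, so that head masses are sums over `range k`. -/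
def sortedAbs (i : ℕ) : ℝ := if h : i < n then |v (σ ⟨i, h⟩)| else 0

theorem sortedAbs_nonneg (i : ℕ) : 0 ≤ sortedAbs v σ i := by
  unfold sortedAbs
  split
  · exact abs_nonneg _
  · exact le_rfl

variable {v σ} in
theorem sortedAbs_le_sortedAbs (hσ : IsOrdering v σ) {i j : ℕ} (hij : i ≤ j) (hj : j < n) :
    sortedAbs v σ i ≤ sortedAbs v σ j := by
  rw [sortedAbs, sortedAbs, dif_pos (hij.trans_lt hj), dif_pos hj]
  exact hσ _ _ hij

theorem abs_trunc_apply {k : ℕ} (hk : k ≤ n) (i : Fin k) :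
    |trunc v σ k hk i| = sortedAbs v σ i := by
  rw [sortedAbs, dif_pos (i.2.trans_le hk)]
  rfl

theorem norm_trunc_sq {k : ℕ} (hk : k ≤ n) :
    ‖trunc v σ k hk‖ ^ 2 = ∑ i ∈ range k, sortedAbs v σ i ^ 2 := by
  rw [EuclideanSpace.norm_sq_eq, ← Fin.sum_univ_eq_sum_range]
  simp only [Real.norm_eq_abs, abs_trunc_apply]

theorem norm_trunc_self : ‖trunc v σ n le_rfl‖ = ‖v‖ := by
  rw [EuclideanSpace.norm_eq, EuclideanSpace.norm_eq]
  congr 1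
  exact Equiv.sum_comp σ fun i => ‖v i‖ ^ 2

/-- Zeroing the `k` smallest coordinates leaves an `(n - k)`-sparse vector at distance
`‖trunc v σ k hk‖` from `v`. -/
theorem lt_norm_trunc_of_mem_Incomp {δ ρ : ℝ} (hv : v ∈ Incomp δ ρ) {k : ℕ} (hk : k ≤ n)
    (hsparse : ((n - k : ℕ) : ℝ) ≤ δ * n) : ρ < ‖trunc v σ k hk‖ := by
  classical
  set z : EuclideanSpace ℝ (Fin n) := toE fun i => if k ≤ (σ.symm i : ℕ) then v i else 0
  have hsupp : suppCard z ≤ n - k := by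
    calc suppCard z ≤ Nat.card {j : Fin n // k ≤ (j : ℕ)} := by
          refine Nat.card_le_card_of_injective (fun i => ⟨σ.symm i.1, ?_⟩) ?_
          · by_contra h
            exact i.2 (if_neg h)
          · intro i j hij
            exact Subtype.ext (σ.symm.injective (congrArg Subtype.val hij))
      _ = n - k := by
          rw [Nat.card_eq_fintype_card, Fintype.card_subtype]
          have h := card_filter_add_card_filter_not (s := (univ : Finset (Fin n)))
            fun j : Fin n => (j : ℕ) < k
          simp only [not_lt, Fin.card_filter_val_lt, card_univ, Fintype.card_fin] at h
          omega
  have hcoord : ∀ j : Fin n,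
      ‖(v - z) (σ j)‖ ^ 2 = if k ≤ (j : ℕ) then 0 else sortedAbs v σ j ^ 2 := by
    intro j
    by_cases hj : k ≤ (j : ℕ) <;> simp [z, toE, sortedAbs, hj]
  have hdist : ‖v - z‖ = ‖trunc v σ k hk‖ := by
    rw [← sq_eq_sq₀ (norm_nonneg _) (norm_nonneg _), norm_trunc_sq, EuclideanSpace.norm_sq_eq,
      ← Equiv.sum_comp σ, sum_congr rfl fun j _ => hcoord j,
      Fin.sum_univ_eq_sum_range (fun j => if k ≤ j then 0 else sortedAbs v σ j ^ 2),
      ← sum_range_add_sum_Ico _ hk, sum_eq_zero fun j hj => if_pos (mem_Ico.1 hj).1, add_zero]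
    exact sum_congr rfl fun j hj => if_neg (not_le.2 (mem_range.1 hj))
  by_contra! h
  exact hv.2 ⟨hv.1, z, (Nat.cast_le.2 hsupp).trans hsparse, hdist ▸ h⟩

end SortedCoordinates

theorem sum_range_sub_le_pow_mul_sum_range (a : ℕ → ℝ) {β : ℝ} (hβ : β ≤ 1) {n r : ℕ}
    (h : ∀ k, n - r < k → k ≤ n → β * ∑ i ∈ range k, a i ^ 2 < a (k - 1) ^ 2) :
    ∑ i ∈ range (n - r), a i ^ 2 ≤ (1 - β) ^ r * ∑ i ∈ range n, a i ^ 2 := by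
  induction r with
  | zero => simp
  | succ r ih =>
    have hstep : ∑ i ∈ range (n - (r + 1)), a i ^ 2 ≤ (1 - β) * ∑ i ∈ range (n - r), a i ^ 2 := by
      rcases Nat.eq_zero_or_pos (n - r) with h0 | hpos
      · rw [h0, show n - (r + 1) = 0 by omega]
        simp
      · have hlarge := h (n - r) (by omega) (by omega)
        rw [show n - r = n - (r + 1) + 1 by omega, sum_range_succ] at hlarge ⊢
        rw [Nat.add_sub_cancel] at hlarge
        linarith
    calc ∑ i ∈ range (n - (r + 1)), a i ^ 2
        ≤ (1 - β) * ((1 - β) ^ r * ∑ i ∈ range n, a i ^ 2) :=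
          hstep.trans (mul_le_mul_of_nonneg_left (ih fun k hk hkn => h k (by omega) hkn)
            (by linarith))
      _ = (1 - β) ^ (r + 1) * ∑ i ∈ range n, a i ^ 2 := by ring

/-- Otherwise the head masses would decay geometrically at rate `1 - β` over the last `r` steps,
leaving less than `ρ ^ 2` on the `n - r` smallest coordinates. -/
theorem exists_flat_trunc {n : ℕ} {v : EuclideanSpace ℝ (Fin n)} {σ : Equiv.Perm (Fin n)}
    (hσ : IsOrdering v σ) {δ ρ β : ℝ} (hv : v ∈ Incomp δ ρ) (hρ : 0 ≤ ρ) (hβ : β ≤ 1) {r : ℕ}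
    (hr : (r : ℝ) ≤ δ * n) (hdecay : (1 - β) ^ r < ρ ^ 2) :
    ∃ k, ∃ hk : k ≤ n, n - r < k ∧ trunc v σ k hk ≠ 0 ∧
      ∀ i, trunc v σ k hk i ^ 2 ≤ β * ‖trunc v σ k hk‖ ^ 2 := by
  have hsparse : ∀ k, n - r ≤ k → ((n - k : ℕ) : ℝ) ≤ δ * n := fun k hk =>
    le_trans (by exact_mod_cast (by omega : n - k ≤ r)) hr
  obtain ⟨k, hrk, hk, hlast⟩ : ∃ k, n - r < k ∧ k ≤ n ∧
      sortedAbs v σ (k - 1) ^ 2 ≤ β * ∑ i ∈ range k, sortedAbs v σ i ^ 2 := by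
    by_contra! h
    have hhead := lt_norm_trunc_of_mem_Incomp v σ hv (Nat.sub_le n r) (hsparse _ le_rfl)
    have hdec := sum_range_sub_le_pow_mul_sum_range (sortedAbs v σ) hβ h
    rw [← norm_trunc_sq v σ (Nat.sub_le n r), ← norm_trunc_sq v σ le_rfl, norm_trunc_self,
      hv.1, one_pow, mul_one] at hdec
    nlinarith [pow_lt_pow_left₀ hhead hρ two_ne_zero]
  refine ⟨k, hk, hrk, ?_, fun i => ?_⟩
  · exact norm_pos_iff.1 (hρ.trans_lt (lt_norm_trunc_of_mem_Incomp v σ hv hk (hsparse k hrk.le)))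
  · rw [norm_trunc_sq, ← sq_abs, abs_trunc_apply]
    exact (pow_le_pow_left₀ (sortedAbs_nonneg v σ i)
      (sortedAbs_le_sortedAbs hσ (by omega) (by omega)) 2).trans hlast

theorem abs_le_abs_sub_intCast {x : ℝ} (hx : |x| ≤ 1 / 2) (m : ℤ) : |x| ≤ |x - m| := by
  rcases eq_or_ne m 0 with rfl | hm
  · simp
  · have hm1 : (1 : ℝ) ≤ |(m : ℝ)| := by exact_mod_cast Int.one_le_abs hm
    have := abs_sub_abs_le_abs_sub (m : ℝ) x
    rw [abs_sub_comm] at this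
    linarith

theorem norm_le_norm_sub_intCast {m : ℕ} (x : EuclideanSpace ℝ (Fin m))
    (hx : ∀ i, |x i| ≤ 1 / 2) (p : Fin m → ℤ) : ‖x‖ ≤ ‖x - toE fun i => (p i : ℝ)‖ := by
  rw [EuclideanSpace.norm_eq, EuclideanSpace.norm_eq]
  gcongr with i
  exact abs_le_abs_sub_intCast (hx i) (p i)

theorem sqrt_logPlus_le {x : ℝ} (hx : 0 ≤ x) : √(logPlus x) ≤ x := by
  have hlog : logPlus x ≤ x ^ 2 := by
    refine max_le ?_ (sq_nonneg x)
    rcases hx.eq_or_lt with rfl | hx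
    · simp
    · nlinarith [Real.log_le_sub_one_of_pos hx]
  simpa [Real.sqrt_sq hx] using Real.sqrt_le_sqrt hlog

theorem mul_sqrt_logPlus_div_le {L x : ℝ} (hL : 0 < L) (hx : 0 ≤ x) :
    L * √(logPlus (x / L)) ≤ x :=
  calc L * √(logPlus (x / L)) ≤ L * (x / L) := by gcongr; exact sqrt_logPlus_le (by positivity)
    _ = x := mul_div_cancel₀ x hL.ne'

theorem LCD_set_nonempty {m : ℕ} {L : ℝ} (hL : 0 < L) {u : EuclideanSpace ℝ (Fin m)}
    (hu : ‖u‖ = 1) :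
    {θ : ℝ | 0 < θ ∧ ∃ p : Fin m → ℤ,
      ‖θ • u - toE (fun i => (p i : ℝ))‖ < L * √(logPlus (‖θ • u‖ / L))}.Nonempty := by
  set s := ((m : ℝ) + 1) / L ^ 2
  set θ := L * exp s
  refine ⟨θ, by positivity, fun i => round ((θ • u) i), ?_⟩
  have hlog : logPlus (‖θ • u‖ / L) = s := by
    rw [norm_smul, hu, mul_one, Real.norm_of_nonneg (by positivity), mul_div_cancel_left₀ _ hL.ne',
      logPlus, Real.log_exp, max_eq_left (by positivity)]
  have hround : ‖θ • u - toE fun i => (round ((θ • u) i) : ℝ)‖ ^ 2 ≤ m / 4 := by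
    rw [EuclideanSpace.norm_sq_eq]
    calc ∑ i, ‖(θ • u - toE fun i => (round ((θ • u) i) : ℝ)) i‖ ^ 2
        ≤ ∑ _i : Fin m, (1 / 2 : ℝ) ^ 2 := by
          gcongr with i
          exact abs_sub_round _
      _ = m / 4 := by simp; ring
  have hthreshold : (L * √s) ^ 2 = m + 1 := by
    rw [mul_pow, Real.sq_sqrt (by positivity)]
    simp only [s]
    field_simp
  rw [hlog]
  exact lt_of_pow_lt_pow_left₀ 2 (by positivity) (by linarith)

/-- A vector with all coordinates in `[-1/2, 1/2]` is at least as close to `0` as to any integer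
point, while the LCD threshold `L √(log₊ (‖x‖ / L))` never exceeds `‖x‖`. -/
theorem le_LCD_of_forall_mul_abs_le {m : ℕ} {L : ℝ} (hL : 0 < L) {u : EuclideanSpace ℝ (Fin m)}
    (hu : ‖u‖ = 1) {t : ℝ} (ht : ∀ i, t * |u i| ≤ 1 / 2) : t ≤ LCD L u := by
  refine le_csInf (LCD_set_nonempty hL hu) ?_
  rintro θ ⟨hθ, p, hp⟩
  by_contra! hθt
  have hsmall : ∀ i, |(θ • u) i| ≤ 1 / 2 := fun i => by
    rw [PiLp.smul_apply, smul_eq_mul, abs_mul, abs_of_pos hθ]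
    exact (mul_le_mul_of_nonneg_right hθt.le (abs_nonneg _)).trans (ht i)
  exact (hp.trans_le (mul_sqrt_logPlus_div_le hL (norm_nonneg _))).not_ge
    (norm_le_norm_sub_intCast _ hsmall p)

theorem norm_nzd {m : ℕ} {w : EuclideanSpace ℝ (Fin m)} (hw : w ≠ 0) : ‖nzd w‖ = 1 := by
  rw [nzd, norm_smul, norm_inv, norm_norm, inv_mul_cancel₀ (norm_ne_zero_iff.2 hw)]

theorem le_LCD_nzd_of_sq_le {m : ℕ} {L : ℝ} (hL : 0 < L) {w : EuclideanSpace ℝ (Fin m)}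
    (hw : w ≠ 0) {β t : ℝ} (hflat : ∀ i, w i ^ 2 ≤ β * ‖w‖ ^ 2) (ht : t ^ 2 * β ≤ 1 / 4) :
    t ≤ LCD L (nzd w) := by
  have hw' : 0 < ‖w‖ := norm_pos_iff.2 hw
  refine le_LCD_of_forall_mul_abs_le hL (norm_nzd hw) fun i => ?_
  have hcoord : t * |w i| ≤ ‖w‖ / 2 := by
    refine (le_abs_self _).trans (abs_le_of_sq_le_sq ?_ (by positivity))
    calc (t * |w i|) ^ 2 = t ^ 2 * w i ^ 2 := by rw [mul_pow, sq_abs]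
      _ ≤ t ^ 2 * (β * ‖w‖ ^ 2) := mul_le_mul_of_nonneg_left (hflat i) (sq_nonneg t)
      _ = (t ^ 2 * β) * ‖w‖ ^ 2 := by ring
      _ ≤ 1 / 4 * ‖w‖ ^ 2 := mul_le_mul_of_nonneg_right ht (sq_nonneg _)
      _ = (‖w‖ / 2) ^ 2 := by ring
  calc t * |nzd w i| = t * |w i| / ‖w‖ := by
        rw [nzd, PiLp.smul_apply, smul_eq_mul, abs_mul, abs_inv, abs_norm]
        ring
    _ ≤ ‖w‖ / 2 / ‖w‖ := by gcongr
    _ = 1 / 2 := by field_simp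

theorem one_le_log_of_three_le {x : ℝ} (hx : 3 ≤ x) : 1 ≤ log x := by
  rw [Real.le_log_iff_exp_le (by linarith)]
  linarith [Real.exp_one_lt_d9]

theorem log_sq_le_sixteen_mul_sqrt {x : ℝ} (hx : 1 ≤ x) : log x ^ 2 ≤ 16 * √x := by
  have h := Real.log_le_rpow_div (x := x) (by linarith) (by norm_num : (0 : ℝ) < 1 / 4)
  calc log x ^ 2 ≤ (x ^ (1 / 4 : ℝ) / (1 / 4)) ^ 2 := pow_le_pow_left₀ (Real.log_nonneg hx) h 2
    _ = 16 * √x := by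
      rw [Real.sqrt_eq_rpow, div_pow, ← Real.rpow_natCast, ← Real.rpow_mul (by linarith)]
      norm_num
      ring

theorem three_mul_log_sq_le {δ x : ℝ} (hδ : 0 < δ) (hx : 1 ≤ x) (hδx : 2304 ≤ δ ^ 2 * x) :
    3 * log x ^ 2 ≤ δ * x := by
  -- `2304 = 48 ^ 2` and `48 = 3 * 16`
  have hsqrt : 48 ≤ δ * √x := by
    refine abs_le_of_sq_le_sq' ?_ (by positivity) |>.2
    rw [mul_pow, Real.sq_sqrt (by linarith)]
    linarith
  have hsx : √x * √x = x := Real.mul_self_sqrt (by linarith)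
  nlinarith [log_sq_le_sixteen_mul_sqrt hx, Real.sqrt_nonneg x]

theorem one_sub_pow_floor_lt {δ x : ℝ} (hδ : 0 < δ) (hx : 3 ≤ x) (hδx : 2304 ≤ δ ^ 2 * x) :
    (1 - 3 * log x ^ 2 / (δ * x)) ^ ⌊δ * x / log x⌋₊ < δ ^ 2 / x := by
  have hlog := one_le_log_of_three_le hx
  set β := 3 * log x ^ 2 / (δ * x)
  set r := ⌊δ * x / log x⌋₊
  have hβ0 : 0 ≤ β := by positivity
  have hβ1 : β ≤ 1 := div_le_one_of_le₀ (three_mul_log_sq_le hδ (by linarith) hδx) (by positivity)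
  have hβr : 3 * log x - 1 ≤ β * r := by
    have hfloor := Nat.sub_one_lt_floor (δ * x / log x)
    have hprod : δ * x / log x * β = 3 * log x := by
      simp only [β]
      field_simp
    nlinarith
  have hexp : exp (3 * log x) = x ^ 3 := by
    rw [← Real.exp_log (by linarith : 0 < x), ← Real.exp_nat_mul, Real.exp_log (by linarith)]
    norm_num
  calc (1 - β) ^ r ≤ exp (-β) ^ r := pow_le_pow_left₀ (by linarith) (Real.one_sub_le_exp_neg β) r
    _ = exp (-(β * r)) := by rw [← Real.exp_nat_mul]; ring_nf
    _ ≤ exp (1 - 3 * log x) := Real.exp_le_exp.2 (by linarith)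
    _ = exp 1 / x ^ 3 := by rw [Real.exp_sub, hexp]
    _ < δ ^ 2 / x := by
      rw [div_lt_div_iff₀ (by positivity) (by positivity)]
      nlinarith [Real.exp_one_lt_d9, mul_le_mul_of_nonneg_right hδx (sq_nonneg x),
        mul_le_mul_of_nonneg_right hx (by linarith : (0 : ℝ) ≤ x)]

theorem sq_div_le_sq_mul_rpow {x γ : ℝ} (hx : 1 ≤ x) (hγ : γ < 1) (δ : ℝ) :
    δ ^ 2 / x ≤ (δ * x ^ ((1 : ℝ) / 2 - γ)) ^ 2 := by
  have hpow : x ^ (-(1 : ℝ) / 2) ≤ x ^ ((1 : ℝ) / 2 - γ) :=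
    Real.rpow_le_rpow_of_exponent_le hx (by linarith)
  have hsq : (x ^ (-(1 : ℝ) / 2)) ^ 2 = x⁻¹ := by
    rw [← Real.rpow_natCast, ← Real.rpow_mul (by linarith)]
    norm_num [Real.rpow_neg_one]
  calc δ ^ 2 / x = δ ^ 2 * (x ^ (-(1 : ℝ) / 2)) ^ 2 := by rw [hsq, div_eq_mul_inv]
    _ ≤ δ ^ 2 * (x ^ ((1 : ℝ) / 2 - γ)) ^ 2 := by gcongr
    _ = (δ * x ^ ((1 : ℝ) / 2 - γ)) ^ 2 := by ring

theorem lcd_lower_bound_incompressible_general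
    (L : ℝ) (hL : 0 < L) (δ : ℝ) (hδ0 : 0 < δ) :
    ∃ c > (0:ℝ), ∃ n₀ : ℕ, ∀ γ : ℝ, 1/2 < γ → γ < 1 → ∀ n > n₀,
      ∀ v ∈ Paper.Incomp (n := n) δ (δ * (n:ℝ) ^ ((1:ℝ)/2 - γ)),
      ∀ σ : Equiv.Perm (Fin n), Paper.IsOrdering v σ →
      ∃ k : ℕ, ∃ hk : k ≤ n, 1 ≤ k ∧ (n:ℝ) - δ * n / Real.log n ≤ (k:ℝ) ∧
        c * Real.sqrt n / Real.log n ≤ Paper.LCD L (Paper.nzd (Paper.trunc v σ k hk)) := by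
  refine ⟨√(δ / 12), by positivity, ⌈2304 / δ ^ 2⌉₊ + 2, fun γ _ hγ n hn v hv σ hσ => ?_⟩
  have hn3 : (3 : ℝ) ≤ n := by exact_mod_cast (by omega : 3 ≤ n)
  have hδn : 2304 ≤ δ ^ 2 * n := by
    have := (Nat.le_ceil (2304 / δ ^ 2)).trans (Nat.cast_le.2 (by omega : ⌈2304 / δ ^ 2⌉₊ ≤ n))
    rwa [div_le_iff₀' (by positivity)] at this
  have hlog := one_le_log_of_three_le hn3
  have hr : (⌊δ * n / log n⌋₊ : ℝ) ≤ δ * n / log n := Nat.floor_le (by positivity)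
  obtain ⟨k, hk, hrk, hw, hflat⟩ := exists_flat_trunc hσ hv (by positivity)
    (div_le_one_of_le₀ (three_mul_log_sq_le hδ0 (by linarith) hδn) (by positivity))
    (hr.trans (div_le_self (by positivity) hlog))
    ((one_sub_pow_floor_lt hδ0 hn3 hδn).trans_le (sq_div_le_sq_mul_rpow (by linarith) hγ δ))
  refine ⟨k, hk, by omega, ?_, le_LCD_nzd_of_sq_le hL hw hflat (le_of_eq ?_)⟩
  · have : (n : ℝ) ≤ ⌊δ * n / log n⌋₊ + k := by exact_mod_cast (by omega : n ≤ _ + k)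
    linarith
  · rw [div_pow, mul_pow, Real.sq_sqrt (by positivity), Real.sq_sqrt (by positivity)]
    field_simp
    ring

theorem lcd_lower_bound_incompressible
    (L : ℝ) (hL : 0 < L) (δ : ℝ) (hδ0 : 0 < δ) (hδ1 : δ < 1) :
    ∃ c > (0:ℝ), ∃ n₀ : ℕ, ∀ γ : ℝ, 1/2 < γ → γ < 1 → ∀ n > n₀,
      ∀ v ∈ Paper.Incomp (n := n) δ (δ * (n:ℝ) ^ ((1:ℝ)/2 - γ)),
      ∀ σ : Equiv.Perm (Fin n), Paper.IsOrdering v σ →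
      ∃ k : ℕ, ∃ hk : k ≤ n, 1 ≤ k ∧ (n:ℝ) - δ * n / Real.log n ≤ (k:ℝ) ∧
        c * Real.sqrt n / Real.log n ≤ Paper.LCD L (Paper.nzd (Paper.trunc v σ k hk)) :=
  lcd_lower_bound_incompressible_general L hL δ hδ0

end Paper
end
end

section
/- Fix L > 0 and let x ∈ S^{n-1} satisfy LCD_{L,n}(x) ≤ 2D for some D > 0, and suppose there exists p ∈ ℤⁿ with ‖θx - p‖₂ ≤ L√(log₊(θ/L)) where θ = LCD_{L,n}(x) ≥ D. Then ‖x - p/‖p‖₂‖₂ ≤ (4L/D)·√(log₊(2D/L)). -/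
open MeasureTheory ProbabilityTheory Real
open scoped ENNReal

noncomputable section

namespace Paper

/-
If `θ • x` is within `ε` of the integer point `p`, then `x` is within `ε / θ` of `θ⁻¹ • p`, and
normalizing at most doubles the distance from a unit vector (also for `p = 0`, whose
normalization is `0`). Since `D ≤ θ ≤ 2D`, the error
`2 L √(log₊(θ/L)) / θ` is at most `2 L √(log₊(2D/L)) / D`.
-/

section Normalize

open NormedSpace

variable {V : Type*} [NormedAddCommGroup V] [NormedSpace ℝ V]

theorem norm_sub_normalize_le_two_mul_norm_sub {x : V} (hx : ‖x‖ = 1) (y : V) :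
    ‖x - normalize y‖ ≤ 2 * ‖x - y‖ := by
  have h_normalize : ‖normalize y‖ ≤ 1 := by
    by_cases hy : y = 0
    · simp [hy]
    · exact (norm_normalize hy).le
  have h_radial : ‖y - normalize y‖ ≤ ‖x - y‖ :=
    calc ‖y - normalize y‖ = ‖(‖y‖ - 1) • normalize y‖ := by
          rw [sub_smul, one_smul, norm_smul_normalize]
      _ = |‖y‖ - 1| * ‖normalize y‖ := by rw [norm_smul, Real.norm_eq_abs]
      _ ≤ |‖y‖ - ‖x‖| := by
          rw [hx]
          exact mul_le_of_le_one_right (abs_nonneg _) h_normalize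
      _ ≤ ‖x - y‖ := by
          rw [norm_sub_rev x]
          exact abs_norm_sub_norm_le y x
  calc ‖x - normalize y‖ ≤ ‖x - y‖ + ‖y - normalize y‖ := norm_sub_le_norm_sub_add_norm_sub _ _ _
    _ ≤ 2 * ‖x - y‖ := by linarith

theorem norm_sub_normalize_le_of_norm_smul_sub_le {x q : V} (hx : ‖x‖ = 1) {θ ε : ℝ}
    (hθ : 0 < θ) (h : ‖θ • x - q‖ ≤ ε) : ‖x - normalize q‖ ≤ 2 * ε / θ := by
  have h_scale : ‖x - θ⁻¹ • q‖ = ‖θ • x - q‖ / θ :=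
    calc ‖x - θ⁻¹ • q‖ = ‖θ⁻¹ • (θ • x - q)‖ := by
          rw [smul_sub, smul_smul, inv_mul_cancel₀ hθ.ne', one_smul]
      _ = ‖θ • x - q‖ / θ := by
          rw [norm_smul, Real.norm_of_nonneg (inv_nonneg.mpr hθ.le), inv_mul_eq_div]
  calc ‖x - normalize q‖ = ‖x - normalize (θ⁻¹ • q)‖ := by
        rw [normalize_smul_of_pos (inv_pos.mpr hθ)]
    _ ≤ 2 * (‖θ • x - q‖ / θ) := h_scale ▸ norm_sub_normalize_le_two_mul_norm_sub hx _
    _ ≤ 2 * ε / θ := by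
        rw [← mul_div_assoc]
        gcongr

end Normalize

theorem logPlus_le_logPlus {x y : ℝ} (hx : 0 < x) (hxy : x ≤ y) : logPlus x ≤ logPlus y :=
  max_le_max (Real.log_le_log hx hxy) le_rfl

theorem approx_by_normalized_integer_point {n : ℕ} (L D : ℝ) (hL : 0 < L) (hD : 0 < D)
    (x : EuclideanSpace ℝ (Fin n)) (hx : ‖x‖ = 1)
    (hub : Paper.LCD L x ≤ 2 * D) (hlb : D ≤ Paper.LCD L x)
    (p : Fin n → ℤ)
    (hp : ‖(Paper.LCD L x) • x - Paper.toE (fun i => (p i : ℝ))‖ ≤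
        L * Real.sqrt (Paper.logPlus (Paper.LCD L x / L))) :
    ‖x - ‖Paper.toE (fun i => (p i : ℝ))‖⁻¹ • Paper.toE (fun i => (p i : ℝ))‖ ≤
      4 * L / D * Real.sqrt (Paper.logPlus (2 * D / L)) := by
  set θ := LCD L x
  have hθ : 0 < θ := hD.trans_le hlb
  have h_log : logPlus (θ / L) ≤ logPlus (2 * D / L) :=
    logPlus_le_logPlus (div_pos hθ hL) (div_le_div_of_nonneg_right hub hL.le)
  calc _ ≤ 2 * (L * √(logPlus (θ / L))) / θ :=
        norm_sub_normalize_le_of_norm_smul_sub_le hx hθ hp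
    _ ≤ 2 * (L * √(logPlus (2 * D / L))) / D := by
        gcongr
    _ = 2 * L / D * √(logPlus (2 * D / L)) := by ring
    _ ≤ 4 * L / D * √(logPlus (2 * D / L)) := by
        gcongr
        norm_num

end Paper
end
end
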